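/- Let T be a standard Borel space, ν a finite G-invariant Borel measure on T, G a countable group acting on T by Borel bijections with orbit equivalence relation R, and S a finite symmetric generating set of G. Suppose R is hyperfinite: there is an increasing sequence (Q_n) of Borel subrelations of R, each of whose classes is finite, such that for ν-almost every x ∈ T one has ⋃_n Q_n[x] = R[x]. Then for ν-almost every x ∈ T, liminf_{n→∞} #∂Q_n[x] / #Q_n[x] = 0; in particular ν-almost every orbit is Følner, i.e., it contains finite subsets A_n with #∂A_n / #A_n → 0. (This is the invariant-measure case of Proposition 4.2, i.e., the discrete form of the Carrière–Ghys direction of Theorem 1.1: amenable implies Følner.) -/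

import Mathlib

/-!
Mass transport: if `Q` is a Borel subrelation of the orbit relation with finite classes, then
moving each point's share `1 / #Q[x]` along the group action and using the invariance of `ν`
gives `∫ #(Q[x] ∩ B) / #Q[x] dν = ν B` for every Borel set `B`.

The boundary of `Q_n[x]` is covered by the sets `Q_n[x] ∩ {z | ¬ Q_n z (s • z)}`, `s ∈ S`, so
the integral of the isoperimetric ratio `#∂Q_n[x] / #Q_n[x]` is at most
`∑ s ∈ S, ν {z | ¬ Q_n z (s • z)}`, which tends to `0` because the `Q_n` increase and
exhaust almost every orbit. By Fatou's lemma the ratio then has lower limit `0` almost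
everywhere, and a subsequence of the classes `Q_n[x]` is a Følner sequence in the orbit of `x`.
-/

open MeasureTheory MulAction Set Filter

/-- The boundary of a set `A` with respect to a finite symmetric set `S` of group
elements: the points of `A` moved outside of `A` by some element of `S`. -/
def smulBoundary {G T : Type*} [SMul G T] (S : Finset G) (A : Set T) : Set T :=
  {y ∈ A | ∃ s ∈ S, s • y ∉ A}

open scoped ENNReal Topology

theorem Filter.frequently_lt_of_liminf_ofReal_eq_zero {ι : Type*} {l : Filter ι} {u : ι → ℝ}
    (h : liminf (fun i => ENNReal.ofReal (u i)) l = 0) {ε : ℝ} (hε : 0 < ε) :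
    ∃ᶠ i in l, u i < ε :=
  (frequently_lt_of_liminf_lt (by isBoundedDefault)
    (h.trans_lt (ENNReal.ofReal_pos.mpr hε))).mono fun _ hi =>
      (ENNReal.ofReal_lt_ofReal_iff'.mp hi).1

theorem Filter.liminf_eq_zero_of_frequently_lt {ι : Type*} {l : Filter ι} [l.NeBot]
    {u : ι → ℝ} (h0 : ∀ i, 0 ≤ u i) (h : ∀ ε > 0, ∃ᶠ i in l, u i < ε) :
    liminf u l = 0 := by
  have hbdd : IsBoundedUnder (· ≥ ·) l u := isBoundedUnder_of ⟨0, h0⟩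
  refine le_antisymm (le_of_forall_pos_le_add fun ε hε => ?_)
    (le_liminf_of_le (.of_frequently_le ((h 1 one_pos).mono fun _ hi => hi.le)) (.of_forall h0))
  simpa using liminf_le_of_frequently_le ((h ε hε).mono fun _ hi => hi.le) hbdd

theorem Filter.exists_tendsto_comp_zero_of_frequently_lt {u : ℕ → ℝ} (h0 : ∀ n, 0 ≤ u n)
    (h : ∀ ε > 0, ∃ᶠ n in atTop, u n < ε) :
    ∃ φ : ℕ → ℕ, Tendsto (u ∘ φ) atTop (𝓝 0) := by
  obtain ⟨φ, -, hφ⟩ := extraction_forall_of_frequently fun k : ℕ =>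
    h (1 / ((k : ℝ) + 1)) Nat.one_div_pos_of_nat
  exact ⟨φ, squeeze_zero (fun k => h0 _) (fun k => (hφ k).le)
    tendsto_one_div_add_atTop_nhds_zero_nat⟩

theorem ENNReal.tsum_indicator_const_of_subset {β : Type*} {s t : Set β} (hst : s ⊆ t)
    (c : ℝ≥0∞) : ∑' x : t, s.indicator (fun _ => c) x = s.encard * c := by
  rw [tsum_subtype t, indicator_indicator, inter_eq_right.mpr hst, ← tsum_subtype,
    ENNReal.tsum_set_const]

theorem Set.Finite.encard_div_encard_eq_ofReal {α : Type*} {s t : Set α} (ht : t.Finite)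
    (hst : s ⊆ t) :
    (s.encard : ℝ≥0∞) / t.encard = ENNReal.ofReal ((Nat.card s : ℝ) / Nat.card t) := by
  rw [← (ht.subset hst).cast_ncard_eq, ← ht.cast_ncard_eq, Nat.card_coe_set_eq,
    Nat.card_coe_set_eq, ENat.toENNReal_coe, ENat.toENNReal_coe]
  rcases (Nat.zero_le t.ncard).eq_or_lt with ht0 | ht0
  · simp [← ht0, Nat.le_zero.mp (ht0 ▸ ncard_le_ncard hst ht)]
  · rw [ENNReal.ofReal_div_of_pos (by exact_mod_cast ht0), ENNReal.ofReal_natCast,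
      ENNReal.ofReal_natCast]

theorem MeasureTheory.tendsto_measure_setOf_not {α : Type*} [MeasurableSpace α]
    {μ : Measure α} [IsFiniteMeasure μ] {P : ℕ → α → Prop}
    (hP : ∀ n, MeasurableSet {x | P n x}) (hmono : ∀ n x, P n x → P (n + 1) x)
    (hae : ∀ᵐ x ∂μ, ∃ n, P n x) : Tendsto (fun n => μ {x | ¬ P n x}) atTop (𝓝 0) := by
  have hnull : μ {x | ∀ n, ¬ P n x} = 0 := by
    simpa [ae_iff] using hae
  rw [ofPred_forall] at hnull
  rw [← hnull]
  exact tendsto_measure_iInter_atTop (fun n => (hP n).compl.nullMeasurableSet)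
    (antitone_nat_of_succ_le fun n x hx h => hx (hmono n x h)) ⟨0, measure_ne_top μ _⟩

theorem MeasureTheory.ae_liminf_eq_zero_of_tendsto_lintegral {α : Type*} [MeasurableSpace α]
    {μ : Measure α} {f : ℕ → α → ℝ≥0∞} (hf : ∀ n, Measurable (f n))
    (h : Tendsto (fun n => ∫⁻ x, f n x ∂μ) atTop (𝓝 0)) :
    ∀ᵐ x ∂μ, liminf (fun n => f n x) atTop = 0 := by
  have hzero : ∫⁻ x, liminf (fun n => f n x) atTop ∂μ = 0 :=
    le_antisymm ((lintegral_liminf_le hf).trans h.liminf_eq.le) zero_le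
  exact (lintegral_eq_zero_iff (.liminf hf)).mp hzero

section Boundary

variable {G T : Type*} [SMul G T]

theorem smulBoundary_setOf_subset {r : T → T → Prop} [IsTrans T r] (S : Finset G) (x : T) :
    smulBoundary S {y | r x y} ⊆ ⋃ s ∈ S, {y | r x y} ∩ {z | ¬ r z (s • z)} := by
  rintro y ⟨hxy, s, hs, hsy⟩
  exact mem_biUnion hs ⟨hxy, fun hys => hsy (_root_.trans hxy hys)⟩

theorem encard_smulBoundary_le {r : T → T → Prop} [IsTrans T r] (S : Finset G) (x : T) :
    ((smulBoundary S {y | r x y}).encard : ℝ≥0∞) ≤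
      ∑ s ∈ S, (({y | r x y} ∩ {z | ¬ r z (s • z)}).encard : ℝ≥0∞) := by
  refine (ENat.toENNReal_le.mpr ((encard_le_encard (smulBoundary_setOf_subset S x)).trans
    (S.set_encard_biUnion_le _))).trans_eq ?_
  exact map_sum ENat.toENNRealRingHom _ _

theorem measurableSet_setOf_mem_smulBoundary [MeasurableSpace T]
    (hact : ∀ g : G, Measurable fun x : T => g • x) {r : T → T → Prop}
    (hr : MeasurableSet {p : T × T | r p.1 p.2}) (S : Finset G) :
    MeasurableSet {p : T × T | p.2 ∈ smulBoundary S {y | r p.1 y}} := by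
  have : {p : T × T | p.2 ∈ smulBoundary S {y | r p.1 y}} =
      {p | r p.1 p.2} ∩
        ⋃ s ∈ S, (fun p : T × T => (p.1, s • p.2)) ⁻¹' {p | r p.1 p.2}ᶜ := by
    ext p
    simp [smulBoundary]
  rw [this]
  exact hr.inter (.biUnion S.countable_toSet fun s _ =>
    (measurable_fst.prodMk ((hact s).comp measurable_snd)) hr.compl)

end Boundary

namespace MulAction

variable {G T : Type*} [Group G] [MulAction G T] {ι : G → ℕ}

/-- Choosing, for each pair `(x, g • x)`, the `ι`-least group element realising it turns sums
over an orbit into sums over `G`, measurably in `x`. -/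
def IsLeastSMul (ι : G → ℕ) (g : G) (x : T) : Prop :=
  ∀ g' : G, g' • x = g • x → ι g ≤ ι g'

theorem exists_isLeastSMul (ι : G → ℕ) (g : G) (x : T) :
    ∃ g₀ : G, g₀ • x = g • x ∧ IsLeastSMul ι g₀ x := by
  obtain ⟨g₀, hg₀, hmin⟩ :=
    (InvImage.wf ι wellFounded_lt).has_min {g' | g' • x = g • x} ⟨g, rfl⟩
  exact ⟨g₀, hg₀, fun g' hg' => not_lt.mp (hmin g' (hg'.trans hg₀))⟩

theorem IsLeastSMul.eq (hι : ι.Injective) {g₁ g₂ : G} {x : T} (h₁ : IsLeastSMul ι g₁ x)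
    (h₂ : IsLeastSMul ι g₂ x) (h : g₁ • x = g₂ • x) : g₁ = g₂ :=
  hι ((h₁ g₂ h.symm).antisymm (h₂ g₁ h))

section Sums

variable {α : Type*} [AddCommMonoid α] [TopologicalSpace α]

theorem tsum_orbit_eq_tsum_isLeastSMul (hι : ι.Injective) (f : T → α) (x : T) :
    ∑' y : orbit G x, f y =
      ∑' g, {g | IsLeastSMul ι g x}.indicator (fun g => f (g • x)) g := by
  let e : {g // IsLeastSMul ι g x} ≃ orbit G x := Equiv.ofBijective
    (fun g => ⟨g.1 • x, mem_orbit x g.1⟩)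
    ⟨fun g₁ g₂ h => Subtype.ext (g₁.2.eq hι g₂.2 (congrArg Subtype.val h)),
     fun ⟨y, hy⟩ => by
      obtain ⟨g, rfl⟩ := hy
      obtain ⟨g₀, hg₀, hleast⟩ := exists_isLeastSMul ι g x
      exact ⟨⟨g₀, hleast⟩, Subtype.ext hg₀⟩⟩
  rw [← e.tsum_eq, ← tsum_subtype]
  rfl

theorem tsum_orbit_eq_tsum_isLeastSMul_inv (hι : ι.Injective) (f : T → α) (y : T) :
    ∑' x : orbit G y, f x =
      ∑' g, {g | IsLeastSMul ι g (g⁻¹ • y)}.indicator (fun g => f (g⁻¹ • y)) g := by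
  let e : {g // IsLeastSMul ι g (g⁻¹ • y)} ≃ orbit G y := Equiv.ofBijective
    (fun g => ⟨g.1⁻¹ • y, mem_orbit y g.1⁻¹⟩)
    ⟨fun g₁ g₂ h => by
      have h' : g₁.1⁻¹ • y = g₂.1⁻¹ • y := congrArg Subtype.val h
      have h₂ := g₂.2
      rw [← h'] at h₂
      exact Subtype.ext (g₁.2.eq hι h₂ (by rw [smul_inv_smul, h', smul_inv_smul])),
     fun ⟨x, hx⟩ => by
      obtain ⟨g, rfl⟩ := mem_orbit_iff.mp (mem_orbit_symm.mp hx)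
      obtain ⟨g₀, hg₀, hleast⟩ := exists_isLeastSMul ι g x
      refine ⟨⟨g₀, ?_⟩, Subtype.ext ?_⟩
      · rwa [← hg₀, inv_smul_smul]
      · simp only [← hg₀, inv_smul_smul]⟩
  rw [← e.tsum_eq, ← tsum_subtype]
  rfl

end Sums

theorem tsum_orbit_indicator_inv_encard_eq_one {Q : T → T → Prop} (hQ : Equivalence Q)
    (hQ_orbit : ∀ x y, Q x y → y ∈ orbit G x) (hQ_fin : ∀ x, {y | Q x y}.Finite) (y : T) :
    ∑' x : orbit G y, {x | Q x y}.indicator (fun x => ({z | Q x z}.encard : ℝ≥0∞)⁻¹) x =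
      1 := by
  have hclass : ∀ x, {x | Q x y}.indicator (fun x => ({z | Q x z}.encard : ℝ≥0∞)⁻¹) x =
      {x | Q y x}.indicator (fun _ => ({z | Q y z}.encard : ℝ≥0∞)⁻¹) x := fun x => by
    by_cases hxy : Q x y
    · have hsame : {z | Q x z} = {z | Q y z} :=
        ext fun z => ⟨hQ.trans (hQ.symm hxy), hQ.trans hxy⟩
      rw [indicator_of_mem (s := {x | Q x y}) hxy,
        indicator_of_mem (s := {x | Q y x}) (hQ.symm hxy), hsame]
    · rw [indicator_of_notMem (s := {x | Q x y}) hxy,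
        indicator_of_notMem (s := {x | Q y x}) fun h => hxy (hQ.symm h)]
  simp_rw [hclass]
  rw [ENNReal.tsum_indicator_const_of_subset (s := {x | Q y x}) (hQ_orbit y)]
  refine ENNReal.mul_inv_cancel ?_ (by simpa using hQ_fin y)
  rw [ne_eq, ← ENat.toENNReal_zero, ENat.toENNReal_inj, ← ne_eq, encard_ne_zero]
  exact ⟨y, hQ.refl y⟩

variable [MeasurableSpace T] [StandardBorelSpace T] [Countable G]

theorem measurableSet_isLeastSMul (hact : ∀ g : G, Measurable fun x : T => g • x)
    (ι : G → ℕ) (g : G) : MeasurableSet {x : T | IsLeastSMul ι g x} := by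
  have : {x : T | IsLeastSMul ι g x} =
      ⋂ (g' : G) (_ : ι g' < ι g), {x | g' • x ≠ g • x} := by
    ext x
    simp only [IsLeastSMul, mem_ofPred_eq, mem_iInter]
    exact forall_congr' fun g' => by rw [← not_lt]; exact imp_not_comm
  rw [this]
  exact .iInter fun g' => .iInter fun _ => (measurableSet_eq_fun (hact g') (hact g)).compl

theorem measurable_indicator_isLeastSMul (hact : ∀ g : G, Measurable fun x : T => g • x)
    (ι : G → ℕ) {F : T → T → ℝ≥0∞} (hF : Measurable (Function.uncurry F)) (g : G) :
    Measurable fun x => {g | IsLeastSMul ι g x}.indicator (fun g => F x (g • x)) g := by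
  classical
  simp only [indicator_apply, mem_ofPred_eq]
  exact Measurable.ite (measurableSet_isLeastSMul hact ι g)
    (hF.comp (measurable_id.prodMk (hact g))) measurable_const

theorem measurable_tsum_orbit (hact : ∀ g : G, Measurable fun x : T => g • x)
    {F : T → T → ℝ≥0∞} (hF : Measurable (Function.uncurry F)) :
    Measurable fun x => ∑' y : orbit G x, F x y := by
  obtain ⟨ι, hι⟩ := exists_injective_nat G
  simp_rw [tsum_orbit_eq_tsum_isLeastSMul hι]
  exact .tsum (measurable_indicator_isLeastSMul hact ι hF)

theorem lintegral_tsum_orbit_comm (hact : ∀ g : G, Measurable fun x : T => g • x)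
    {ν : Measure T} (hinv : ∀ g : G, Measure.map (fun x : T => g • x) ν = ν)
    {F : T → T → ℝ≥0∞} (hF : Measurable (Function.uncurry F)) :
    ∫⁻ x, ∑' y : orbit G x, F x y ∂ν = ∫⁻ y, ∑' x : orbit G y, F x y ∂ν := by
  classical
  obtain ⟨ι, hι⟩ := exists_injective_nat G
  have hsource := measurable_indicator_isLeastSMul hact ι hF
  have htarget : ∀ g : G, Measurable fun y =>
      {g | IsLeastSMul ι g (g⁻¹ • y)}.indicator (fun g => F (g⁻¹ • y) y) g := by
    intro g
    simp only [indicator_apply, mem_ofPred_eq]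
    exact Measurable.ite (hact g⁻¹ (measurableSet_isLeastSMul hact ι g))
      (hF.comp ((hact g⁻¹).prodMk measurable_id)) measurable_const
  calc ∫⁻ x, ∑' y : orbit G x, F x y ∂ν
      = ∑' g, ∫⁻ x, {g | IsLeastSMul ι g x}.indicator (fun g => F x (g • x)) g ∂ν := by
        simp_rw [tsum_orbit_eq_tsum_isLeastSMul hι]
        exact lintegral_tsum fun g => (hsource g).aemeasurable
    _ = ∑' g, ∫⁻ y, {g | IsLeastSMul ι g (g⁻¹ • y)}.indicator
          (fun g => F (g⁻¹ • y) y) g ∂ν := by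
        refine tsum_congr fun g => ?_
        conv_lhs => rw [← hinv g⁻¹, lintegral_map (hsource g) (hact g⁻¹)]
        simp only [indicator_apply, mem_ofPred_eq, smul_inv_smul]
    _ = ∫⁻ y, ∑' x : orbit G y, F x y ∂ν := by
        simp_rw [fun y => tsum_orbit_eq_tsum_isLeastSMul_inv hι (F · y) y]
        exact (lintegral_tsum fun g => (htarget g).aemeasurable).symm

theorem measurable_encard_setOf (hact : ∀ g : G, Measurable fun x : T => g • x)
    {r : T → T → Prop} (hr : MeasurableSet {p : T × T | r p.1 p.2})
    (hr_orbit : ∀ x y, r x y → y ∈ orbit G x) :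
    Measurable fun x => ({y | r x y}.encard : ℝ≥0∞) := by
  convert measurable_tsum_orbit hact (F := fun x y => {p : T × T | r p.1 p.2}.indicator 1 (x, y))
    (measurable_one.indicator hr) using 1
  funext x
  have h := ENNReal.tsum_indicator_const_of_subset (s := {y | r x y}) (hr_orbit x) 1
  rw [mul_one] at h
  exact h.symm

theorem lintegral_encard_inter_div_encard (hact : ∀ g : G, Measurable fun x : T => g • x)
    {ν : Measure T} (hinv : ∀ g : G, Measure.map (fun x : T => g • x) ν = ν)
    {Q : T → T → Prop} (hQ : Equivalence Q) (hQ_meas : MeasurableSet {p : T × T | Q p.1 p.2})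
    (hQ_orbit : ∀ x y, Q x y → y ∈ orbit G x) (hQ_fin : ∀ x, {y | Q x y}.Finite)
    {B : Set T} (hB : MeasurableSet B) :
    ∫⁻ x, (({y | Q x y} ∩ B).encard : ℝ≥0∞) / {y | Q x y}.encard ∂ν = ν B := by
  classical
  let F : T → T → ℝ≥0∞ := fun x y => {p : T × T | Q p.1 p.2 ∧ p.2 ∈ B}.indicator
    (fun p => ({z | Q p.1 z}.encard : ℝ≥0∞)⁻¹) (x, y)
  have hF : Measurable (Function.uncurry F) :=
    ((measurable_encard_setOf hact hQ_meas hQ_orbit).comp measurable_fst).inv.indicator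
      (hQ_meas.inter (measurable_snd hB))
  have hsource : ∀ x, ∑' y : orbit G x, F x y =
      (({y | Q x y} ∩ B).encard : ℝ≥0∞) / {y | Q x y}.encard := fun x => by
    rw [div_eq_mul_inv, ← ENNReal.tsum_indicator_const_of_subset (s := {y | Q x y} ∩ B)
      (inter_subset_left.trans fun y => hQ_orbit x y)]
    rfl
  have htarget : ∀ y, ∑' x : orbit G y, F x y = B.indicator 1 y := fun y => by
    by_cases hy : y ∈ B
    · rw [indicator_of_mem hy, Pi.one_apply,
        ← tsum_orbit_indicator_inv_encard_eq_one hQ hQ_orbit hQ_fin y]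
      simp [F, indicator_apply, hy]
    · simp [F, indicator_apply, hy]
  calc ∫⁻ x, (({y | Q x y} ∩ B).encard : ℝ≥0∞) / {y | Q x y}.encard ∂ν
      = ∫⁻ x, ∑' y : orbit G x, F x y ∂ν := by simp_rw [hsource]
    _ = ∫⁻ y, ∑' x : orbit G y, F x y ∂ν := lintegral_tsum_orbit_comm hact hinv hF
    _ = ν B := by simp_rw [htarget]; exact lintegral_indicator_one hB

theorem lintegral_encard_smulBoundary_div_le (hact : ∀ g : G, Measurable fun x : T => g • x)
    {ν : Measure T} (hinv : ∀ g : G, Measure.map (fun x : T => g • x) ν = ν)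
    {Q : T → T → Prop} (hQ : Equivalence Q) (hQ_meas : MeasurableSet {p : T × T | Q p.1 p.2})
    (hQ_orbit : ∀ x y, Q x y → y ∈ orbit G x) (hQ_fin : ∀ x, {y | Q x y}.Finite)
    (S : Finset G) :
    ∫⁻ x, ((smulBoundary S {y | Q x y}).encard : ℝ≥0∞) / {y | Q x y}.encard ∂ν ≤
      ∑ s ∈ S, ν {z | ¬ Q z (s • z)} := by
  have := hQ.isTrans
  have hbad : ∀ s : G, MeasurableSet {z : T | ¬ Q z (s • z)} := fun s =>
    (measurable_id.prodMk (hact s) hQ_meas).compl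
  have hN := measurable_encard_setOf hact hQ_meas hQ_orbit
  calc ∫⁻ x, ((smulBoundary S {y | Q x y}).encard : ℝ≥0∞) / {y | Q x y}.encard ∂ν
      ≤ ∫⁻ x, ∑ s ∈ S, (({y | Q x y} ∩ {z | ¬ Q z (s • z)}).encard : ℝ≥0∞) /
          {y | Q x y}.encard ∂ν := lintegral_mono fun x => by
        simp only [div_eq_mul_inv, ← Finset.sum_mul]
        exact mul_le_mul_left (encard_smulBoundary_le S x) _
    _ = ∑ s ∈ S, ∫⁻ x, (({y | Q x y} ∩ {z | ¬ Q z (s • z)}).encard : ℝ≥0∞) /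
          {y | Q x y}.encard ∂ν := lintegral_finsetSum _ fun s _ =>
        (measurable_encard_setOf hact (r := fun x y => Q x y ∧ ¬ Q y (s • y))
          (hQ_meas.inter (measurable_snd (hbad s))) fun x y h => hQ_orbit x y h.1).div hN
    _ = ∑ s ∈ S, ν {z | ¬ Q z (s • z)} := Finset.sum_congr rfl fun s _ =>
        lintegral_encard_inter_div_encard hact hinv hQ hQ_meas hQ_orbit hQ_fin (hbad s)

theorem ae_liminf_encard_smulBoundary_div_eq_zero
    (hact : ∀ g : G, Measurable fun x : T => g • x) {ν : Measure T} [IsFiniteMeasure ν]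
    (hinv : ∀ g : G, Measure.map (fun x : T => g • x) ν = ν)
    {Q : ℕ → T → T → Prop} (hQ : ∀ n, Equivalence (Q n))
    (hQ_meas : ∀ n, MeasurableSet {p : T × T | Q n p.1 p.2})
    (hQ_orbit : ∀ n x y, Q n x y → y ∈ orbit G x) (hQ_fin : ∀ n x, {y | Q n x y}.Finite)
    (hQ_mono : ∀ n x y, Q n x y → Q (n + 1) x y)
    (hQ_exhaust : ∀ᵐ x ∂ν, ∀ y ∈ orbit G x, ∃ n, Q n x y) (S : Finset G) :
    ∀ᵐ x ∂ν, liminf (fun n =>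
      ((smulBoundary S {y | Q n x y}).encard : ℝ≥0∞) / {y | Q n x y}.encard) atTop = 0 := by
  have hbad : ∀ s ∈ S, Tendsto (fun n => ν {z | ¬ Q n z (s • z)}) atTop (𝓝 0) :=
    fun s _ => tendsto_measure_setOf_not (fun n => measurable_id.prodMk (hact s) (hQ_meas n))
      (fun n z => hQ_mono n z _) (hQ_exhaust.mono fun x hx => hx _ (mem_orbit x s))
  have hsum : Tendsto (fun n => ∑ s ∈ S, ν {z | ¬ Q n z (s • z)}) atTop (𝓝 0) := by
    simpa using tendsto_finsetSum S hbad
  refine ae_liminf_eq_zero_of_tendsto_lintegral (fun n => ?_)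
    (tendsto_of_tendsto_of_tendsto_of_le_of_le tendsto_const_nhds hsum (fun _ => zero_le)
      fun n => lintegral_encard_smulBoundary_div_le hact hinv (hQ n) (hQ_meas n) (hQ_orbit n)
        (hQ_fin n) S)
  exact (measurable_encard_setOf hact (measurableSet_setOf_mem_smulBoundary hact (hQ_meas n) S)
    fun x y hy => hQ_orbit n x y hy.1).div (measurable_encard_setOf hact (hQ_meas n) (hQ_orbit n))

end MulAction

theorem hyperfinite_implies_folner_invariant_general
    {T : Type*} [MeasurableSpace T] [StandardBorelSpace T]
    {G : Type*} [Group G] [Countable G] [MulAction G T]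
    (hact : ∀ g : G, Measurable fun x : T => g • x)
    (ν : Measure T) [IsFiniteMeasure ν]
    (hinv : ∀ g : G, Measure.map (fun x : T => g • x) ν = ν)
    (S : Finset G)
    (Q : ℕ → T → T → Prop)
    (hQequiv : ∀ n, Equivalence (Q n))
    (hQmeas : ∀ n, MeasurableSet {p : T × T | Q n p.1 p.2})
    (hQsub : ∀ n, ∀ x y : T, Q n x y → y ∈ orbit G x)
    (hQfin : ∀ n, ∀ x : T, {y | Q n x y}.Finite)
    (hQmono : ∀ n, ∀ x y : T, Q n x y → Q (n + 1) x y)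
    (hQexhaust : ∀ᵐ x ∂ν, ∀ y ∈ orbit G x, ∃ n, Q n x y) :
    ∀ᵐ x ∂ν,
      liminf (fun n =>
          (Nat.card ↥(smulBoundary S {y | Q n x y}) : ℝ) / Nat.card ↥{y | Q n x y})
        atTop = 0 ∧
      ∃ A : ℕ → Set T,
        (∀ n, (A n).Finite ∧ (A n).Nonempty ∧ A n ⊆ orbit G x) ∧
        Tendsto (fun n => (Nat.card ↥(smulBoundary S (A n)) : ℝ) / Nat.card ↥(A n))
          atTop (nhds 0) := by
  filter_upwards [ae_liminf_encard_smulBoundary_div_eq_zero hact hinv hQequiv hQmeas hQsub hQfin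
    hQmono hQexhaust S] with x hx
  set ratio : ℕ → ℝ := fun n =>
    (Nat.card ↥(smulBoundary S {y | Q n x y}) : ℝ) / Nat.card ↥{y | Q n x y}
  have hratio_nonneg : ∀ n, 0 ≤ ratio n := fun n => by positivity
  have hofReal : ∀ n,
      ((smulBoundary S {y | Q n x y}).encard : ℝ≥0∞) / {y | Q n x y}.encard =
        ENNReal.ofReal (ratio n) := fun n =>
    (hQfin n x).encard_div_encard_eq_ofReal fun y hy => hy.1
  simp only [hofReal] at hx
  have hsmall : ∀ ε > 0, ∃ᶠ n in atTop, ratio n < ε := fun ε hε =>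
    frequently_lt_of_liminf_ofReal_eq_zero hx hε
  obtain ⟨φ, hφ⟩ := exists_tendsto_comp_zero_of_frequently_lt hratio_nonneg hsmall
  exact ⟨liminf_eq_zero_of_frequently_lt hratio_nonneg hsmall, fun k => {y | Q (φ k) x y},
    fun k => ⟨hQfin _ x, ⟨x, (hQequiv _).refl x⟩, hQsub _ x⟩, hφ⟩

/-- **Proposition 4.2, invariant-measure case (the discrete Carrière–Ghys direction of
Theorem 1.1: amenable implies Følner).**
Let `ν` be a finite invariant measure for the action of a countable group `G` on a
standard Borel space `T` by Borel bijections, and let `S` be a finite symmetric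
generating set of `G`. If the orbit equivalence relation `R` is hyperfinite, witnessed
by an increasing sequence `Q n` of Borel subrelations with finite classes exhausting
`R` almost everywhere, then for `ν`-almost every `x` the isoperimetric ratios
`#∂Q_n[x] / #Q_n[x]` have lower limit `0`; in particular almost every orbit is
Følner. -/
theorem hyperfinite_implies_folner_invariant
    {T : Type*} [MeasurableSpace T] [StandardBorelSpace T]
    {G : Type*} [Group G] [Countable G] [MulAction G T]
    (hact : ∀ g : G, Measurable fun x : T => g • x)
    (ν : Measure T) [IsFiniteMeasure ν]
    (hinv : ∀ g : G, Measure.map (fun x : T => g • x) ν = ν)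
    (S : Finset G) (hSsym : ∀ s ∈ S, s⁻¹ ∈ S)
    (hSgen : Subgroup.closure (S : Set G) = ⊤)
    (Q : ℕ → T → T → Prop)
    (hQequiv : ∀ n, Equivalence (Q n))
    (hQmeas : ∀ n, MeasurableSet {p : T × T | Q n p.1 p.2})
    (hQsub : ∀ n, ∀ x y : T, Q n x y → y ∈ orbit G x)
    (hQfin : ∀ n, ∀ x : T, {y | Q n x y}.Finite)
    (hQmono : ∀ n, ∀ x y : T, Q n x y → Q (n + 1) x y)
    (hQexhaust : ∀ᵐ x ∂ν, ∀ y ∈ orbit G x, ∃ n, Q n x y) :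
    ∀ᵐ x ∂ν,
      liminf (fun n =>
          (Nat.card ↥(smulBoundary S {y | Q n x y}) : ℝ) / Nat.card ↥{y | Q n x y})
        atTop = 0 ∧
      ∃ A : ℕ → Set T,
        (∀ n, (A n).Finite ∧ (A n).Nonempty ∧ A n ⊆ orbit G x) ∧
        Tendsto (fun n => (Nat.card ↥(smulBoundary S (A n)) : ℝ) / Nat.card ↥(A n))
          atTop (nhds 0) :=
  hyperfinite_implies_folner_invariant_general hact ν hinv S Q hQequiv hQmeas hQsub hQfin hQmono
    hQexhaust
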